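/- Let u be a C² function on the closure of Q solving the heat problem, and let u_h be a C¹ function on the closure of Q vanishing on Σ and satisfying the initial condition exactly, u_h(·,0) = u0 = u(·,0) on Σ0; set e := u − u_h. For β > 0 define the advanced majorant evaluated at the exact data (η = u − u_h, y = ∇x u): M̄ᴵᴵ(u_h,u) := ‖u − u_h‖²_{Σ_T} + 2·F(u_h, u − u_h) + 4·(1+β)·‖∇x(u − u_h)‖²_Q, where F(v,η) := (∇x v, ∇x η)_Q + (∂t v − f, η)_Q. Then M̄ᴵᴵ(u_h,u) = (4·(1+β) − 2)·‖∇x e‖²_Q, and consequently ‖∇x e‖²_Q ≤ M̄ᴵᴵ(u_h,u) ≤ (4·(1+β) − 2)·‖∇x e‖²_Q. -/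

import Mathlib

open MeasureTheory Set
open scoped RealInnerProductSpace

noncomputable section

/-- Spatial gradient of a scalar space-time function. -/
def gradX {d : ℕ} (u : EuclideanSpace ℝ (Fin d) → ℝ → ℝ)
    (x : EuclideanSpace ℝ (Fin d)) (t : ℝ) : EuclideanSpace ℝ (Fin d) :=
  gradient (fun x' => u x' t) x

/-- Time derivative of a scalar space-time function. -/
def dT {d : ℕ} (u : EuclideanSpace ℝ (Fin d) → ℝ → ℝ)
    (x : EuclideanSpace ℝ (Fin d)) (t : ℝ) : ℝ :=
  deriv (fun s => u x s) t

/-- Time derivative of a vector-valued space-time function. -/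
def dTvec {d : ℕ} (y : EuclideanSpace ℝ (Fin d) → ℝ → EuclideanSpace ℝ (Fin d))
    (x : EuclideanSpace ℝ (Fin d)) (t : ℝ) : EuclideanSpace ℝ (Fin d) :=
  deriv (fun s => y x s) t

/-- Spatial divergence of a vector field on space-time. -/
def divX {d : ℕ} (y : EuclideanSpace ℝ (Fin d) → ℝ → EuclideanSpace ℝ (Fin d))
    (x : EuclideanSpace ℝ (Fin d)) (t : ℝ) : ℝ :=
  ∑ i, fderiv ℝ (fun x' => y x' t i) x (EuclideanSpace.single i 1)

/-- Spatial Laplacian. -/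
def lapX {d : ℕ} (u : EuclideanSpace ℝ (Fin d) → ℝ → ℝ) :
    EuclideanSpace ℝ (Fin d) → ℝ → ℝ :=
  divX (gradX u)

/-- Squared L²(Q)-norm of a scalar function, Q = Ω × (0,T). -/
def normQsq {d : ℕ} (Ω : Set (EuclideanSpace ℝ (Fin d))) (T : ℝ)
    (w : EuclideanSpace ℝ (Fin d) → ℝ → ℝ) : ℝ :=
  ∫ x in Ω, ∫ t in Ioo (0:ℝ) T, (w x t) ^ 2

/-- Squared L²(Q)-norm of a vector field. -/
def normQsqVec {d : ℕ} (Ω : Set (EuclideanSpace ℝ (Fin d))) (T : ℝ)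
    (y : EuclideanSpace ℝ (Fin d) → ℝ → EuclideanSpace ℝ (Fin d)) : ℝ :=
  ∫ x in Ω, ∫ t in Ioo (0:ℝ) T, ‖y x t‖ ^ 2

/-- Squared L²(Σ_T)-norm (top face t = T) of a scalar function. -/
def normSTsq {d : ℕ} (Ω : Set (EuclideanSpace ℝ (Fin d))) (T : ℝ)
    (w : EuclideanSpace ℝ (Fin d) → ℝ → ℝ) : ℝ :=
  ∫ x in Ω, (w x T) ^ 2

/-- Squared L²(Σ_T)-norm (top face t = T) of a vector field. -/
def normSTsqVec {d : ℕ} (Ω : Set (EuclideanSpace ℝ (Fin d))) (T : ℝ)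
    (y : EuclideanSpace ℝ (Fin d) → ℝ → EuclideanSpace ℝ (Fin d)) : ℝ :=
  ∫ x in Ω, ‖y x T‖ ^ 2

/-- L²(Q) inner product of scalar functions. -/
def innQ {d : ℕ} (Ω : Set (EuclideanSpace ℝ (Fin d))) (T : ℝ)
    (v w : EuclideanSpace ℝ (Fin d) → ℝ → ℝ) : ℝ :=
  ∫ x in Ω, ∫ t in Ioo (0:ℝ) T, v x t * w x t

/-- L²(Q) inner product of vector fields. -/
def innQvec {d : ℕ} (Ω : Set (EuclideanSpace ℝ (Fin d))) (T : ℝ)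
    (y z : EuclideanSpace ℝ (Fin d) → ℝ → EuclideanSpace ℝ (Fin d)) : ℝ :=
  ∫ x in Ω, ∫ t in Ioo (0:ℝ) T, (inner ℝ (y x t) (z x t) : ℝ)

/-- Flux residual `R_d(v,y) = y - ∇x v`. -/
def Rd {d : ℕ} (v : EuclideanSpace ℝ (Fin d) → ℝ → ℝ)
    (y : EuclideanSpace ℝ (Fin d) → ℝ → EuclideanSpace ℝ (Fin d)) :
    EuclideanSpace ℝ (Fin d) → ℝ → EuclideanSpace ℝ (Fin d) :=
  fun x t => y x t - gradX v x t

/-- Equation residual `R_eq(v,y) = f - ∂t v + divx y`. -/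
def Req {d : ℕ} (f v : EuclideanSpace ℝ (Fin d) → ℝ → ℝ)
    (y : EuclideanSpace ℝ (Fin d) → ℝ → EuclideanSpace ℝ (Fin d)) :
    EuclideanSpace ℝ (Fin d) → ℝ → ℝ :=
  fun x t => f x t - dT v x t + divX y x t

/-- The majorant `M̄ᴵ(v,y;β)`. -/
def MajI {d : ℕ} (Ω : Set (EuclideanSpace ℝ (Fin d))) (T C_F : ℝ)
    (f v : EuclideanSpace ℝ (Fin d) → ℝ → ℝ)
    (y : EuclideanSpace ℝ (Fin d) → ℝ → EuclideanSpace ℝ (Fin d)) (β : ℝ) : ℝ :=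
  (1 + β) * normQsqVec Ω T (Rd v y) + (1 + 1/β) * C_F ^ 2 * normQsq Ω T (Req f v y)

/-- Scalar function that is (the restriction of) a globally smooth function on space-time. -/
def SmoothFn {d : ℕ} (u : EuclideanSpace ℝ (Fin d) → ℝ → ℝ) : Prop :=
  ContDiff ℝ (⊤ : ℕ∞) (fun p : EuclideanSpace ℝ (Fin d) × ℝ => u p.1 p.2)

/-- Vector field that is (the restriction of) a globally smooth function on space-time. -/
def SmoothVec {d : ℕ} (y : EuclideanSpace ℝ (Fin d) → ℝ → EuclideanSpace ℝ (Fin d)) : Prop :=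
  ContDiff ℝ (⊤ : ℕ∞) (fun p : EuclideanSpace ℝ (Fin d) × ℝ => y p.1 p.2)


/-- The advanced majorant evaluated at the exact data `η = u - u_h`, `y = ∇x u`. -/
def MajIIexact {d : ℕ} (Ω : Set (EuclideanSpace ℝ (Fin d))) (T : ℝ)
    (f u_h u : EuclideanSpace ℝ (Fin d) → ℝ → ℝ) (β : ℝ) : ℝ :=
  normSTsq Ω T (fun x t => u x t - u_h x t)
    + 2 * (innQvec Ω T (gradX u_h) (gradX (fun x t => u x t - u_h x t))
            + innQ Ω T (fun x t => dT u_h x t - f x t) (fun x t => u x t - u_h x t))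
    + 4 * (1 + β) * normQsqVec Ω T (gradX (fun x t => u x t - u_h x t))


/-!
With `e = u - u_h`, the heat equation `f = ∂t u - Δx u` in `Q` turns `F(u_h, e)` into
`(∇u_h - ∇u, ∇e)_Q + [(∇u, ∇e)_Q + (Δu, e)_Q] - (∂t e, e)_Q`. The first term is `-‖∇x e‖²_Q`,
the bracket vanishes by Green's formula in space because `e = 0` on `Σ`, and
`(∂t e, e)_Q = ½‖e‖²_{Σ_T}` because `e = 0` on `Σ0`. Hence `2 F(u_h, e) = -2‖∇x e‖²_Q - ‖e‖²_{Σ_T}`,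
which gives `M̄ᴵᴵ(u_h, u) = (4(1+β) - 2)‖∇x e‖²_Q`, and `4(1+β) - 2 ≥ 1`.

Green's formula on an arbitrary bounded open `Ω` is reduced, one coordinate direction at a time and
by Fubini, to lines; there it is the fundamental theorem of calculus on each connected component
of an open bounded subset of `ℝ`, an open interval whose endpoints lie on the boundary.
-/

open Bornology

theorem Continuous.integrableOn_of_isBounded {X E : Type*} [MetricSpace X] [ProperSpace X]
    [MeasurableSpace X] [OpensMeasurableSpace X] {μ : Measure X} [IsFiniteMeasureOnCompacts μ]
    [NormedAddCommGroup E] {g : X → E} (hg : Continuous g) {s : Set X} (hs : IsBounded s) :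
    IntegrableOn g s μ :=
  (hg.continuousOn.integrableOn_compact hs.isCompact_closure).mono_set subset_closure

theorem Continuous.integrable_prod_restrict {X Y : Type*} [MetricSpace X] [ProperSpace X]
    [MeasureSpace X] [OpensMeasurableSpace X] [IsFiniteMeasureOnCompacts (volume : Measure X)]
    [MetricSpace Y] [ProperSpace Y] [MeasureSpace Y] [OpensMeasurableSpace Y]
    [IsFiniteMeasureOnCompacts (volume : Measure Y)] {g : X × Y → ℝ} (hg : Continuous g)
    {s : Set X} {t : Set Y} (hs : IsBounded s) (ht : IsBounded t) :
    Integrable g ((volume.restrict s).prod (volume.restrict t)) := by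
  rw [Measure.prod_restrict]
  exact hg.integrableOn_of_isBounded (hs.prod ht)

theorem IsOpen.connectedComponentIn_eq_Ioo {S : Set ℝ} (hS : IsOpen S) (hSb : IsBounded S)
    {x : ℝ} (hx : x ∈ S) :
    ∃ a b, connectedComponentIn S x = Ioo a b ∧ a ∈ frontier S ∧ b ∈ frontier S := by
  set C := connectedComponentIn S x
  have hCo : IsOpen C := hS.connectedComponentIn
  have hCc : IsConnected C := isConnected_connectedComponentIn_iff.2 hx
  have hCS : C ⊆ S := connectedComponentIn_subset S x
  have hbdd : BddBelow C ∧ BddAbove C := ⟨(hSb.subset hCS).bddBelow, (hSb.subset hCS).bddAbove⟩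
  have hfr : ∀ z ∈ closure C, z ∉ C → z ∈ frontier S := by
    refine fun z hz hzC => ⟨closure_mono hCS hz, fun hzS => hzC ?_⟩
    rw [hS.interior_eq] at hzS
    exact (hCc.isPreconnected.subset_closure (subset_insert z C)
      (insert_subset hz subset_closure)).subset_connectedComponentIn
      (mem_insert_of_mem z (mem_connectedComponentIn hx)) (insert_subset hzS hCS) (mem_insert z C)
  have hinf : sInf C ∉ C := fun h => by
    have hev : ∀ᶠ y in nhds (sInf C), y ∈ C := hCo.mem_nhds h
    obtain ⟨y, hy, hyC⟩ := hev.exists_lt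
    exact (csInf_le hbdd.1 hyC).not_gt hy
  have hsup : sSup C ∉ C := fun h => by
    have hev : ∀ᶠ y in nhds (sSup C), y ∈ C := hCo.mem_nhds h
    obtain ⟨y, hy, hyC⟩ := hev.exists_gt
    exact (le_csSup hbdd.2 hyC).not_gt hy
  refine ⟨sInf C, sSup C, ?_, hfr _ (csInf_mem_closure hCc.nonempty hbdd.1) hinf,
    hfr _ (csSup_mem_closure hCc.nonempty hbdd.2) hsup⟩
  refine subset_antisymm (fun z hz => ⟨?_, ?_⟩) (hCc.Ioo_csInf_csSup_subset hbdd.1 hbdd.2)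
  · exact (csInf_le hbdd.1 hz).lt_of_ne (ne_of_mem_of_not_mem hz hinf).symm
  · exact (le_csSup hbdd.2 hz).lt_of_ne (ne_of_mem_of_not_mem hz hsup)

theorem IsOpen.setIntegral_eq_zero_of_connectedComponentIn {E : Type*} [NormedAddCommGroup E]
    [NormedSpace ℝ E] {S : Set ℝ} (hS : IsOpen S) {g : ℝ → E} (hg : IntegrableOn g S)
    (hcomp : ∀ x ∈ S, ∫ s in connectedComponentIn S x, g s = 0) : ∫ s in S, g s = 0 := by
  set 𝒞 := connectedComponentIn S '' S
  have : Countable 𝒞 := by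
    refine ((countable_range fun q : ℚ => connectedComponentIn S q).mono ?_).to_subtype
    rintro _ ⟨x, hx, rfl⟩
    obtain ⟨q, hq⟩ := Rat.denseRange_cast.exists_mem_open hS.connectedComponentIn
      ⟨x, mem_connectedComponentIn hx⟩
    exact ⟨q, (connectedComponentIn_eq hq).symm⟩
  have hunion : S = ⋃ C : 𝒞, (C : Set ℝ) := by
    rw [← sUnion_eq_iUnion, sUnion_image]
    exact subset_antisymm (fun x hx => mem_biUnion hx (mem_connectedComponentIn hx))
      (iUnion₂_subset fun x _ => connectedComponentIn_subset S x)
  have hdisj : Pairwise (Function.onFun Disjoint fun C : 𝒞 => (C : Set ℝ)) := by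
    intro C₁ C₂ hne
    obtain ⟨_, x, hx, rfl⟩ := C₁
    obtain ⟨_, y, hy, rfl⟩ := C₂
    refine disjoint_left.2 fun z hzx hzy => hne ?_
    exact Subtype.ext ((connectedComponentIn_eq hzx).trans (connectedComponentIn_eq hzy).symm)
  have hmeas : ∀ C : 𝒞, MeasurableSet (C : Set ℝ) := by
    rintro ⟨_, x, -, rfl⟩
    exact hS.connectedComponentIn.measurableSet
  rw [hunion, integral_iUnion hmeas hdisj (hunion ▸ hg)]
  refine (tsum_congr fun C => ?_).trans tsum_zero
  obtain ⟨_, x, hx, rfl⟩ := C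
  exact hcomp x hx

theorem IsOpen.setIntegral_deriv_eq_zero {S : Set ℝ} (hS : IsOpen S) (hSb : IsBounded S)
    {h h' : ℝ → ℝ} (hderiv : ∀ s, HasDerivAt h (h' s) s) (hcont : Continuous h')
    (hzero : ∀ s ∈ frontier S, h s = 0) : ∫ s in S, h' s = 0 := by
  refine hS.setIntegral_eq_zero_of_connectedComponentIn (hcont.integrableOn_of_isBounded hSb)
    fun x hx => ?_
  obtain ⟨a, b, hC, ha, hb⟩ := hS.connectedComponentIn_eq_Ioo hSb hx
  have hab : a ≤ b := by
    have hxab := hC ▸ mem_connectedComponentIn hx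
    exact (hxab.1.trans hxab.2).le
  rw [hC, ← integral_Ioc_eq_integral_Ioo, ← intervalIntegral.integral_of_le hab,
    intervalIntegral.integral_eq_sub_of_hasDerivAt (fun s _ => hderiv s)
      (hcont.intervalIntegrable a b), hzero b hb, hzero a ha, sub_zero]

theorem hasDerivAt_toLp_insertNth {m : ℕ} (i : Fin (m + 1)) (y : Fin m → ℝ) (a : ℝ) :
    HasDerivAt (fun a : ℝ => WithLp.toLp 2 (i.insertNth a y : Fin (m + 1) → ℝ))
      (EuclideanSpace.single i 1) a := by
  have hpi : HasDerivAt (fun a : ℝ => (i.insertNth a y : Fin (m + 1) → ℝ)) (Pi.single i 1) a := by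
    refine hasDerivAt_pi.2 fun j => ?_
    rcases eq_or_ne j i with rfl | hj
    · simpa using hasDerivAt_id' a
    · obtain ⟨k, rfl⟩ := Fin.exists_succAbove_eq hj
      simpa [Pi.single_eq_of_ne hj] using hasDerivAt_const a (y k)
  exact (PiLp.continuousLinearEquiv 2 ℝ fun _ : Fin (m + 1) => ℝ).symm.hasFDerivAt.comp_hasDerivAt
    a hpi

theorem IsOpen.setIntegral_fderiv_single_eq_zero {n : ℕ} {Ω : Set (EuclideanSpace ℝ (Fin n))}
    (hΩ : IsOpen Ω) (hΩb : IsBounded Ω) {φ : EuclideanSpace ℝ (Fin n) → ℝ} (hφ : ContDiff ℝ 1 φ)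
    (hφ0 : ∀ x ∈ frontier Ω, φ x = 0) (i : Fin n) :
    ∫ x in Ω, fderiv ℝ φ x (EuclideanSpace.single i 1) = 0 := by
  obtain ⟨m, rfl⟩ : ∃ m, n = m + 1 := Nat.exists_eq_add_one_of_ne_zero (Fin.pos i).ne'
  set D := fun x => fderiv ℝ φ x (EuclideanSpace.single i 1)
  have hD : Continuous D := (hφ.continuous_fderiv one_ne_zero).clm_apply continuous_const
  -- `L (a, y)` has `i`-th coordinate `a` and the other coordinates `y`
  let L : ℝ × (Fin m → ℝ) ≃ᵐ EuclideanSpace ℝ (Fin (m + 1)) :=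
    (MeasurableEquiv.piFinSuccAbove (fun _ => ℝ) i).symm.trans (MeasurableEquiv.toLp 2 _)
  have hL : MeasurePreserving L :=
    (PiLp.volume_preserving_toLp (Fin (m + 1))).comp
      (volume_preserving_piFinSuccAbove (fun _ : Fin (m + 1) => ℝ) i).symm
  have hline : ∀ y a, HasDerivAt (fun a => L (a, y)) (EuclideanSpace.single i 1) a :=
    hasDerivAt_toLp_insertNth i
  have hslice : ∀ y, ∫ a, Ω.indicator D (L (a, y)) = 0 := by
    intro y
    have hσ : Continuous fun a => L (a, y) :=
      continuous_iff_continuousAt.2 fun a => (hline y a).continuousAt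
    have hbdd : IsBounded ((fun a => L (a, y)) ⁻¹' Ω) := by
      obtain ⟨R, hR⟩ := isBounded_iff_forall_norm_le.1 hΩb
      refine isBounded_iff_forall_norm_le.2 ⟨R, fun a ha => ?_⟩
      simpa [L] using (PiLp.norm_apply_le (L (a, y)) i).trans (hR _ ha)
    simp_rw [← indicator_comp_right (fun a => L (a, y)),
      integral_indicator (hΩ.preimage hσ).measurableSet]
    exact (hΩ.preimage hσ).setIntegral_deriv_eq_zero hbdd
      (fun a => (hφ.differentiable one_ne_zero _).hasFDerivAt.comp_hasDerivAt a (hline y a))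
      (hD.comp hσ) fun a ha => hφ0 _ (hσ.frontier_preimage_subset Ω ha)
  have hint : Integrable (Ω.indicator D) :=
    (integrable_indicator_iff hΩ.measurableSet).2 (hD.integrableOn_of_isBounded hΩb)
  calc ∫ x in Ω, D x = ∫ x, Ω.indicator D x := (integral_indicator hΩ.measurableSet).symm
    _ = ∫ p, Ω.indicator D (L p) := (hL.integral_comp' _).symm
    _ = ∫ y, ∫ a, Ω.indicator D (L (a, y)) :=
      integral_prod_symm _ ((hL.integrable_comp_emb L.measurableEmbedding).2 hint)
    _ = 0 := by simp [hslice]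

theorem gradient_apply_eq_fderiv_single {d : ℕ} (f : EuclideanSpace ℝ (Fin d) → ℝ)
    (x : EuclideanSpace ℝ (Fin d)) (i : Fin d) :
    gradient f x i = fderiv ℝ f x (EuclideanSpace.single i 1) := by
  rw [← inner_gradient_left, EuclideanSpace.inner_single_right]
  simp

theorem integral_deriv_mul_self_Ioo {g : ℝ → ℝ} (hg : ContDiff ℝ 1 g) {a b : ℝ} (hab : a ≤ b) :
    ∫ t in Ioo a b, deriv g t * g t = (g b ^ 2 - g a ^ 2) / 2 := by
  have hderiv : ∀ t ∈ uIcc a b, HasDerivAt (fun s => g s ^ 2 / 2) (deriv g t * g t) t :=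
    fun t _ => (((hg.differentiable one_ne_zero t).hasDerivAt.pow 2).div_const 2).congr_deriv
      (by ring)
  rw [← integral_Ioc_eq_integral_Ioo, ← intervalIntegral.integral_of_le hab,
    intervalIntegral.integral_eq_sub_of_hasDerivAt hderiv
      (((hg.continuous_deriv le_rfl).mul hg.continuous).intervalIntegrable a b)]
  ring

section Uncurry

variable {E F : Type*} [NormedAddCommGroup E] [NormedSpace ℝ E] [NormedAddCommGroup F]
  [NormedSpace ℝ F] {y : E → ℝ → F} {x : E} {t : ℝ}

theorem hasFDerivAt_uncurry_left (hy : DifferentiableAt ℝ (Function.uncurry y) (x, t)) :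
    HasFDerivAt (fun x' => y x' t)
      ((fderiv ℝ (Function.uncurry y) (x, t)).comp (ContinuousLinearMap.inl ℝ E ℝ)) x :=
  HasFDerivAt.comp (f := fun e : E => (e, t)) x hy.hasFDerivAt (hasFDerivAt_prodMk_left x t)

theorem hasDerivAt_uncurry_right (hy : DifferentiableAt ℝ (Function.uncurry y) (x, t)) :
    HasDerivAt (fun s => y x s) (fderiv ℝ (Function.uncurry y) (x, t) (0, 1)) t :=
  hy.hasFDerivAt.comp_hasDerivAt t ((hasDerivAt_const t x).prodMk (hasDerivAt_id t))

end Uncurry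

section HeatOperators

variable {d : ℕ} {Ω : Set (EuclideanSpace ℝ (Fin d))} {T : ℝ}

theorem gradX_apply {w : EuclideanSpace ℝ (Fin d) → ℝ → ℝ}
    (hw : Differentiable ℝ (Function.uncurry w)) (x : EuclideanSpace ℝ (Fin d)) (t : ℝ)
    (i : Fin d) :
    gradX w x t i = fderiv ℝ (Function.uncurry w) (x, t) (EuclideanSpace.single i 1, 0) := by
  rw [gradX, gradient_apply_eq_fderiv_single, (hasFDerivAt_uncurry_left (hw _)).fderiv]
  rfl

theorem dT_eq_fderiv {w : EuclideanSpace ℝ (Fin d) → ℝ → ℝ}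
    (hw : Differentiable ℝ (Function.uncurry w)) (x : EuclideanSpace ℝ (Fin d)) (t : ℝ) :
    dT w x t = fderiv ℝ (Function.uncurry w) (x, t) (0, 1) :=
  (hasDerivAt_uncurry_right (hw _)).deriv

theorem divX_eq_sum_fderiv {y : EuclideanSpace ℝ (Fin d) → ℝ → EuclideanSpace ℝ (Fin d)}
    (hy : Differentiable ℝ (Function.uncurry y)) (x : EuclideanSpace ℝ (Fin d)) (t : ℝ) :
    divX y x t = ∑ i, fderiv ℝ (Function.uncurry y) (x, t) (EuclideanSpace.single i 1, 0) i :=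
  Finset.sum_congr rfl fun i _ => congrArg (· (EuclideanSpace.single i 1))
    ((EuclideanSpace.proj i).hasFDerivAt.comp x (hasFDerivAt_uncurry_left (hy _))).fderiv

theorem gradX_sub {u v : EuclideanSpace ℝ (Fin d) → ℝ → ℝ}
    (hu : Differentiable ℝ (Function.uncurry u)) (hv : Differentiable ℝ (Function.uncurry v))
    (x : EuclideanSpace ℝ (Fin d)) (t : ℝ) :
    gradX (fun x t => u x t - v x t) x t = gradX u x t - gradX v x t := by
  rw [gradX, gradient, fderiv_fun_sub (hasFDerivAt_uncurry_left (hu _)).differentiableAt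
    (hasFDerivAt_uncurry_left (hv _)).differentiableAt, map_sub]
  rfl

theorem dT_sub {u v : EuclideanSpace ℝ (Fin d) → ℝ → ℝ}
    (hu : Differentiable ℝ (Function.uncurry u)) (hv : Differentiable ℝ (Function.uncurry v))
    (x : EuclideanSpace ℝ (Fin d)) (t : ℝ) :
    dT (fun x t => u x t - v x t) x t = dT u x t - dT v x t :=
  deriv_fun_sub (hasDerivAt_uncurry_right (hu _)).differentiableAt
    (hasDerivAt_uncurry_right (hv _)).differentiableAt

theorem contDiff_gradX {w : EuclideanSpace ℝ (Fin d) → ℝ → ℝ} {n : WithTop ℕ∞}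
    (hw : ContDiff ℝ (n + 1) (Function.uncurry w)) :
    ContDiff ℝ n (Function.uncurry (gradX w)) := by
  let toEuclidean : (Fin d → ℝ) →L[ℝ] EuclideanSpace ℝ (Fin d) :=
    (PiLp.continuousLinearEquiv 2 ℝ fun _ : Fin d => ℝ).symm
  have hcoord : Function.uncurry (gradX w) = fun p =>
      toEuclidean fun i => fderiv ℝ (Function.uncurry w) p (EuclideanSpace.single i 1, 0) := by
    funext p
    ext i
    exact gradX_apply (hw.differentiable (by simp)) p.1 p.2 i
  rw [hcoord]
  exact toEuclidean.contDiff.comp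
    (contDiff_pi.2 fun i => (hw.fderiv_right le_rfl).clm_apply contDiff_const)

theorem continuous_dT {w : EuclideanSpace ℝ (Fin d) → ℝ → ℝ}
    (hw : ContDiff ℝ 1 (Function.uncurry w)) : Continuous (Function.uncurry (dT w)) := by
  rw [show Function.uncurry (dT w) = fun p => fderiv ℝ (Function.uncurry w) p (0, 1) from
    funext fun p => dT_eq_fderiv (hw.differentiable one_ne_zero) p.1 p.2]
  exact (hw.continuous_fderiv one_ne_zero).clm_apply continuous_const

theorem continuous_divX {y : EuclideanSpace ℝ (Fin d) → ℝ → EuclideanSpace ℝ (Fin d)}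
    (hy : ContDiff ℝ 1 (Function.uncurry y)) : Continuous (Function.uncurry (divX y)) := by
  rw [show Function.uncurry (divX y) = fun p =>
      ∑ i, fderiv ℝ (Function.uncurry y) p (EuclideanSpace.single i 1, 0) i from
    funext fun p => divX_eq_sum_fderiv (hy.differentiable one_ne_zero) p.1 p.2]
  exact continuous_finsetSum _ fun i _ => (PiLp.continuous_apply 2 _ i).comp
    ((hy.continuous_fderiv one_ne_zero).clm_apply continuous_const)

theorem continuous_lapX {u : EuclideanSpace ℝ (Fin d) → ℝ → ℝ}
    (hu : ContDiff ℝ 2 (Function.uncurry u)) : Continuous (Function.uncurry (lapX u)) :=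
  continuous_divX (contDiff_gradX (n := 1) hu)

theorem inner_gradX_add_lapX_mul_eq_sum_fderiv {u c : EuclideanSpace ℝ (Fin d) → ℝ → ℝ}
    {x : EuclideanSpace ℝ (Fin d)} {t : ℝ} (hc : DifferentiableAt ℝ (fun x => c x t) x)
    (hu : ∀ i, DifferentiableAt ℝ (fun x => gradX u x t i) x) :
    ⟪gradX u x t, gradX c x t⟫ + lapX u x t * c x t =
      ∑ i, fderiv ℝ (fun x => c x t * gradX u x t i) x (EuclideanSpace.single i 1) := by
  have hterm : ∀ i, fderiv ℝ (fun x => c x t * gradX u x t i) x (EuclideanSpace.single i 1) =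
      c x t * fderiv ℝ (fun x => gradX u x t i) x (EuclideanSpace.single i 1) +
        gradX u x t i * gradX c x t i := fun i => by
    rw [fderiv_fun_mul hc (hu i)]
    simp only [add_apply, FunLike.coe_smul, Pi.smul_apply, smul_eq_mul,
      ← gradient_apply_eq_fderiv_single]
    rfl
  have hlap : lapX u x t =
      ∑ i, fderiv ℝ (fun x => gradX u x t i) x (EuclideanSpace.single i 1) := rfl
  rw [Finset.sum_congr rfl fun i _ => hterm i, Finset.sum_add_distrib, ← Finset.mul_sum,
    PiLp.inner_apply, hlap]
  simp only [RCLike.inner_apply, conj_trivial, mul_comm (gradX c x t _)]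
  ring

theorem setIntegral_inner_gradX_add_lapX_mul_eq_zero (hΩ : IsOpen Ω) (hΩb : IsBounded Ω)
    {u c : EuclideanSpace ℝ (Fin d) → ℝ → ℝ} (hu : ContDiff ℝ 2 (Function.uncurry u))
    (hc : ContDiff ℝ 1 (Function.uncurry c)) {t : ℝ} (hc0 : ∀ x ∈ frontier Ω, c x t = 0) :
    ∫ x in Ω, (⟪gradX u x t, gradX c x t⟫ + lapX u x t * c x t) = 0 := by
  have hc' : ContDiff ℝ 1 fun x => c x t := hc.comp (contDiff_id.prodMk contDiff_const)
  have hgrad : ∀ i, ContDiff ℝ 1 fun x => gradX u x t i := fun i =>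
    (EuclideanSpace.proj i : EuclideanSpace ℝ (Fin d) →L[ℝ] ℝ).contDiff.comp
      ((contDiff_gradX (n := 1) hu).comp (contDiff_id.prodMk (contDiff_const (c := t))))
  have hflux : ∀ i, ContDiff ℝ 1 fun x => c x t * gradX u x t i := fun i => hc'.mul (hgrad i)
  rw [setIntegral_congr_fun hΩ.measurableSet fun x _ => inner_gradX_add_lapX_mul_eq_sum_fderiv
      (hc'.differentiable one_ne_zero x) fun i => (hgrad i).differentiable one_ne_zero x,
    integral_finsetSum _ fun i _ => (((hflux i).continuous_fderiv one_ne_zero).clm_apply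
      continuous_const).integrableOn_of_isBounded hΩb]
  exact Finset.sum_eq_zero fun i _ =>
    hΩ.setIntegral_fderiv_single_eq_zero hΩb (hflux i) (fun x hx => by simp [hc0 x hx]) i

theorem innQvec_gradX_add_innQ_lapX_eq_zero (hΩ : IsOpen Ω) (hΩb : IsBounded Ω)
    {u c : EuclideanSpace ℝ (Fin d) → ℝ → ℝ} (hu : ContDiff ℝ 2 (Function.uncurry u))
    (hc : ContDiff ℝ 1 (Function.uncurry c))
    (hc0 : ∀ x ∈ frontier Ω, ∀ t ∈ Ioo (0:ℝ) T, c x t = 0) :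
    innQvec Ω T (gradX u) (gradX c) + innQ Ω T (lapX u) c = 0 := by
  have hG := (contDiff_gradX (n := 1) hu).continuous.inner (𝕜 := ℝ)
    (contDiff_gradX (n := 0) hc).continuous
  have hL := (continuous_lapX hu).mul hc.continuous
  have hint := fun {g} (hg : Continuous g) =>
    hg.integrable_prod_restrict hΩb (Metric.isBounded_Ioo (0:ℝ) T)
  calc innQvec Ω T (gradX u) (gradX c) + innQ Ω T (lapX u) c
      = ∫ x in Ω, ∫ t in Ioo 0 T, (⟪gradX u x t, gradX c x t⟫ + lapX u x t * c x t) :=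
        (integral_integral_add (hint hG) (hint hL)).symm
    _ = ∫ t in Ioo 0 T, ∫ x in Ω, (⟪gradX u x t, gradX c x t⟫ + lapX u x t * c x t) :=
        integral_integral_swap (hint (hG.add hL))
    _ = 0 := (setIntegral_congr_fun measurableSet_Ioo fun t ht =>
        setIntegral_inner_gradX_add_lapX_mul_eq_zero hΩ hΩb hu hc fun x hx => hc0 x hx t ht).trans
          (integral_zero _ _)

theorem innQ_dT_mul_self (hΩ : MeasurableSet Ω) (hT : 0 ≤ T) {w : EuclideanSpace ℝ (Fin d) → ℝ → ℝ}
    (hw : ContDiff ℝ 1 (Function.uncurry w)) (hw0 : ∀ x ∈ Ω, w x 0 = 0) :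
    innQ Ω T (dT w) w = normSTsq Ω T w / 2 := by
  rw [innQ, normSTsq, ← integral_div]
  refine setIntegral_congr_fun hΩ fun x hx => ?_
  refine (integral_deriv_mul_self_Ioo (g := w x)
    (hw.comp (contDiff_const.prodMk contDiff_id)) hT).trans ?_
  simp [hw0 x hx]

theorem normQsqVec_nonneg (y : EuclideanSpace ℝ (Fin d) → ℝ → EuclideanSpace ℝ (Fin d)) :
    0 ≤ normQsqVec Ω T y :=
  integral_nonneg fun _ => integral_nonneg fun _ => sq_nonneg _

theorem majIIexact_eq (hΩ : IsOpen Ω) (hΩb : IsBounded Ω) (hT : 0 ≤ T)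
    {f u u_h : EuclideanSpace ℝ (Fin d) → ℝ → ℝ}
    (hu : ContDiff ℝ 2 (Function.uncurry u)) (huh : ContDiff ℝ 1 (Function.uncurry u_h))
    (hheat : ∀ x ∈ Ω, ∀ t ∈ Ioo (0:ℝ) T, dT u x t - lapX u x t = f x t)
    (hB : ∀ x ∈ frontier Ω, ∀ t ∈ Ioo (0:ℝ) T, u x t = u_h x t)
    (h0 : ∀ x ∈ Ω, u x 0 = u_h x 0) (β : ℝ) :
    MajIIexact Ω T f u_h u β
      = (4 * (1 + β) - 2) * normQsqVec Ω T (gradX fun x t => u x t - u_h x t) := by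
  set e := fun x t => u x t - u_h x t
  have hud : Differentiable ℝ (Function.uncurry u) := hu.differentiable two_ne_zero
  have huhd : Differentiable ℝ (Function.uncurry u_h) := huh.differentiable one_ne_zero
  have he : ContDiff ℝ 1 (Function.uncurry e) := (hu.of_le one_le_two).sub huh
  have hGu := (contDiff_gradX (n := 1) hu).continuous
  have hGe := (contDiff_gradX (n := 0) he).continuous
  have hint := fun {g} (hg : Continuous g) =>
    hg.integrable_prod_restrict hΩb (Metric.isBounded_Ioo (0:ℝ) T)
  have hgrad : innQvec Ω T (gradX u_h) (gradX e) =
      innQvec Ω T (gradX u) (gradX e) - normQsqVec Ω T (gradX e) := by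
    have hpt : ∀ x t, ⟪gradX u_h x t, gradX e x t⟫ =
        ⟪gradX u x t, gradX e x t⟫ - ‖gradX e x t‖ ^ 2 := fun x t => by
      rw [show gradX u_h x t = gradX u x t - gradX e x t by rw [gradX_sub hud huhd]; abel,
        inner_sub_left, real_inner_self_eq_norm_sq]
    simp only [innQvec, hpt]
    exact integral_integral_sub (hint (hGu.inner (𝕜 := ℝ) hGe)) (hint (hGe.norm.pow 2))
  have hres : innQ Ω T (fun x t => dT u_h x t - f x t) e =
      innQ Ω T (lapX u) e - innQ Ω T (dT e) e := by
    refine .trans ?_ (integral_integral_sub (hint ((continuous_lapX hu).mul he.continuous))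
      (hint ((continuous_dT he).mul he.continuous)))
    refine setIntegral_congr_fun hΩ.measurableSet fun x hx =>
      setIntegral_congr_fun measurableSet_Ioo fun t ht => ?_
    have hdTe : dT e x t = dT u x t - dT u_h x t := dT_sub hud huhd x t
    simp only [Pi.mul_apply, Function.uncurry_apply_pair, hdTe, ← hheat x hx t ht]
    ring
  rw [MajIIexact, hgrad, hres,
    innQ_dT_mul_self hΩ.measurableSet hT he fun x hx => sub_eq_zero.2 (h0 x hx)]
  linear_combination 2 * innQvec_gradX_add_innQ_lapX_eq_zero hΩ hΩb hu he
    fun x hx t ht => sub_eq_zero.2 (hB x hx t ht)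

end HeatOperators

theorem statement14_general
    {d : ℕ}
    (Ω : Set (EuclideanSpace ℝ (Fin d))) (hΩ : IsOpen Ω) (hΩb : Bornology.IsBounded Ω)
    (T : ℝ) (hT : 0 < T)
    (f u u_h : EuclideanSpace ℝ (Fin d) → ℝ → ℝ) (u0 : EuclideanSpace ℝ (Fin d) → ℝ)
    (hu : ContDiff ℝ 2 (fun p : EuclideanSpace ℝ (Fin d) × ℝ => u p.1 p.2))
    (huh : ContDiff ℝ 1 (fun p : EuclideanSpace ℝ (Fin d) × ℝ => u_h p.1 p.2))
    (hheat : ∀ x ∈ Ω, ∀ t ∈ Ioo (0:ℝ) T, dT u x t - lapX u x t = f x t)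
    (huB : ∀ x ∈ frontier Ω, ∀ t ∈ Ioo (0:ℝ) T, u x t = 0)
    (hu0 : ∀ x ∈ Ω, u x 0 = u0 x)
    (huhB : ∀ x ∈ frontier Ω, ∀ t ∈ Ioo (0:ℝ) T, u_h x t = 0)
    (huh0 : ∀ x ∈ Ω, u_h x 0 = u0 x)
    (β : ℝ) (hβ : 0 < β) :
    MajIIexact Ω T f u_h u β
        = (4 * (1 + β) - 2) * normQsqVec Ω T (gradX (fun x t => u x t - u_h x t))
      ∧ normQsqVec Ω T (gradX (fun x t => u x t - u_h x t)) ≤ MajIIexact Ω T f u_h u β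
      ∧ MajIIexact Ω T f u_h u β
          ≤ (4 * (1 + β) - 2) * normQsqVec Ω T (gradX (fun x t => u x t - u_h x t)) := by
  have key := majIIexact_eq hΩ hΩb hT.le hu huh hheat
    (fun x hx t ht => (huB x hx t ht).trans (huhB x hx t ht).symm)
    (fun x hx => (hu0 x hx).trans (huh0 x hx).symm) β
  refine ⟨key, ?_, key.le⟩
  rw [key]
  exact le_mul_of_one_le_left (normQsqVec_nonneg _) (by linarith)

/-- Identity (eq:equivalence-2): M̄ᴵᴵ(u_h,u) = (4(1+β) − 2)·‖∇x e‖²_Q, together with the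
resulting two-sided bound. -/
theorem statement14
    {d : ℕ}
    (Ω : Set (EuclideanSpace ℝ (Fin d))) (hΩ : IsOpen Ω) (hΩb : Bornology.IsBounded Ω)
    (T : ℝ) (hT : 0 < T)
    (hd : d = 1 ∨ d = 2 ∨ d = 3)
    (f u u_h : EuclideanSpace ℝ (Fin d) → ℝ → ℝ) (u0 : EuclideanSpace ℝ (Fin d) → ℝ)
    (hf : SmoothFn f)
    (hu : ContDiff ℝ 2 (fun p : EuclideanSpace ℝ (Fin d) × ℝ => u p.1 p.2))
    (huh : ContDiff ℝ 1 (fun p : EuclideanSpace ℝ (Fin d) × ℝ => u_h p.1 p.2))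
    (hheat : ∀ x ∈ Ω, ∀ t ∈ Ioo (0:ℝ) T, dT u x t - lapX u x t = f x t)
    (huB : ∀ x ∈ frontier Ω, ∀ t ∈ Ioo (0:ℝ) T, u x t = 0)
    (hu0 : ∀ x ∈ Ω, u x 0 = u0 x)
    (huhB : ∀ x ∈ frontier Ω, ∀ t ∈ Ioo (0:ℝ) T, u_h x t = 0)
    (huh0 : ∀ x ∈ Ω, u_h x 0 = u0 x)
    (β : ℝ) (hβ : 0 < β) :
    MajIIexact Ω T f u_h u β
        = (4 * (1 + β) - 2) * normQsqVec Ω T (gradX (fun x t => u x t - u_h x t))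
      ∧ normQsqVec Ω T (gradX (fun x t => u x t - u_h x t)) ≤ MajIIexact Ω T f u_h u β
      ∧ MajIIexact Ω T f u_h u β
          ≤ (4 * (1 + β) - 2) * normQsqVec Ω T (gradX (fun x t => u x t - u_h x t)) :=
  statement14_general Ω hΩ hΩb T hT f u u_h u0 hu huh hheat huB hu0 huhB huh0 β hβ
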